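/- arXiv:2007.00642 — 2 statements merged into one kernel-verified Lean document; each statement's English description precedes it below -/
import Mathlib

section
/- TVO lower bound gap: for any partition 0 = β_0 < β_1 < … < β_K = 1, log(Z_1/Z_0) − Σ_{k=1}^K (β_k − β_{k-1}) E_{π_{β_{k-1}}}[T] = Σ_{k=1}^K KL(π_{β_{k-1}} ‖ π_{β_k}), and hence the left-Riemann sum Σ_k Δβ_k E_{π_{β_{k-1}}}[T] is a lower bound on log(Z_1/Z_0). -/
/-! The log-ratio of two members of the family is affine in `T`:
`log (π_a / π_b) = (a - b) T + ψ(b) - ψ(a)` with `ψ = log Z`. Integrating against `π_a` gives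
`KL(π_a ‖ π_b) = (a - b) E_{π_a}[T] + ψ(b) - ψ(a)`, so the sum of the KL terms along the partition
telescopes to `ψ(1) - ψ(0)` minus the left Riemann sum. Each KL term is nonnegative by Gibbs'
inequality, which gives the lower bound. -/

open MeasureTheory
open Real (log exp)

lemma Real.sub_le_mul_log_div {p q : ℝ} (hp : 0 ≤ p) (hq : 0 < q) : p - q ≤ p * log (p / q) := by
  have h := mul_nonneg hq.le (InformationTheory.klFun_nonneg (div_nonneg hp hq.le))
  have hexp : q * InformationTheory.klFun (p / q) = p * log (p / q) + q - p := by
    rw [InformationTheory.klFun]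
    field_simp
  linarith

lemma integral_mul_log_div_nonneg {α : Type*} [MeasurableSpace α] {μ : Measure α}
    {p q : α → ℝ} (hp : ∀ z, 0 ≤ p z) (hq : ∀ z, 0 < q z)
    (hp_int : Integrable p μ) (hq_int : Integrable q μ) (hpq : ∫ z, p z ∂μ = ∫ z, q z ∂μ)
    (h_int : Integrable (fun z => p z * log (p z / q z)) μ) :
    0 ≤ ∫ z, p z * log (p z / q z) ∂μ := by
  have h_sub : ∫ z, (p z - q z) ∂μ = 0 := by
    rw [integral_sub hp_int hq_int, hpq, sub_self]
  rw [← h_sub]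
  exact integral_mono (hp_int.sub hq_int) h_int fun z => Real.sub_le_mul_log_div (hp z) (hq z)

section ExpFamily

variable {α : Type*} {π0 T : α → ℝ} {Z : ℝ → ℝ} {π : ℝ → α → ℝ}

lemma expFamily_pos (hpos : ∀ z, 0 < π0 z) (hZpos : ∀ b, 0 < Z b)
    (hπ : ∀ b z, π b z = π0 z * exp (b * T z) / Z b) (b : ℝ) (z : α) : 0 < π b z := by
  rw [hπ]
  exact div_pos (mul_pos (hpos z) (Real.exp_pos _)) (hZpos b)

lemma log_div_expFamily (hpos : ∀ z, 0 < π0 z) (hZpos : ∀ b, 0 < Z b)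
    (hπ : ∀ b z, π b z = π0 z * exp (b * T z) / Z b) (a b : ℝ) (z : α) :
    log (π a z / π b z) = (a - b) * T z + (log (Z b) - log (Z a)) := by
  have hπ0 := (hpos z).ne'
  rw [Real.log_div (expFamily_pos hpos hZpos hπ a z).ne' (expFamily_pos hpos hZpos hπ b z).ne',
    hπ, hπ, Real.log_div (by positivity) (hZpos a).ne', Real.log_div (by positivity) (hZpos b).ne',
    Real.log_mul hπ0 (Real.exp_pos _).ne', Real.log_mul hπ0 (Real.exp_pos _).ne', Real.log_exp,
    Real.log_exp]
  ring

lemma mul_log_div_expFamily (hpos : ∀ z, 0 < π0 z) (hZpos : ∀ b, 0 < Z b)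
    (hπ : ∀ b z, π b z = π0 z * exp (b * T z) / Z b) (a b : ℝ) :
    (fun z => π a z * log (π a z / π b z))
      = fun z => (a - b) * (π a z * T z) + (log (Z b) - log (Z a)) * π a z := by
  ext z
  rw [log_div_expFamily hpos hZpos hπ]
  ring

variable [MeasurableSpace α] {μ : Measure α}

/-- The Bregman form of `KL(π_a ‖ π_b)` for `ψ = log Z`. -/
lemma integral_mul_log_div_expFamily (hpos : ∀ z, 0 < π0 z) (hZpos : ∀ b, 0 < Z b)
    (hπ : ∀ b z, π b z = π0 z * exp (b * T z) / Z b) (hprob : ∀ b, ∫ z, π b z ∂μ = 1)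
    (hT : ∀ b, Integrable (fun z => π b z * T z) μ) (a b : ℝ) :
    Integrable (fun z => π a z * log (π a z / π b z)) μ ∧
      ∫ z, π a z * log (π a z / π b z) ∂μ
        = (a - b) * ∫ z, π a z * T z ∂μ + (log (Z b) - log (Z a)) := by
  have hπ_int : Integrable (π a) μ := Integrable.of_integral_ne_zero (by simp [hprob a])
  rw [mul_log_div_expFamily hpos hZpos hπ]
  refine ⟨((hT a).const_mul _).add (hπ_int.const_mul _), ?_⟩
  rw [integral_add ((hT a).const_mul _) (hπ_int.const_mul _), integral_const_mul,
    integral_const_mul, hprob a, mul_one]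

end ExpFamily

theorem tvo_lower_bound_gap_general {α : Type*} [MeasurableSpace α] (μ : Measure α)
    (π0 T : α → ℝ) (hpos : ∀ z, 0 < π0 z)
    (Z : ℝ → ℝ)
    (hZpos : ∀ b, 0 < Z b)
    (π : ℝ → α → ℝ)
    (hπ : ∀ b z, π b z = π0 z * Real.exp (b * T z) / Z b)
    (hprob : ∀ b, ∫ z, π b z ∂μ = 1)
    (hT : ∀ b, Integrable (fun z => π b z * T z) μ)
    (K : ℕ) (β : ℕ → ℝ)
    (h0 : β 0 = 0) (h1 : β K = 1) :
    (Real.log (Z 1 / Z 0)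
        - ∑ k ∈ Finset.range K,
            (β (k + 1) - β k) * (∫ z, π (β k) z * T z ∂μ)
      = ∑ k ∈ Finset.range K,
          ∫ z, π (β k) z * Real.log (π (β k) z / π (β (k + 1)) z) ∂μ)
    ∧ (∑ k ∈ Finset.range K,
          (β (k + 1) - β k) * (∫ z, π (β k) z * T z ∂μ)
        ≤ Real.log (Z 1 / Z 0)) := by
  have hkl := integral_mul_log_div_expFamily hpos hZpos hπ hprob hT
  have hπ_int (b : ℝ) : Integrable (π b) μ := Integrable.of_integral_ne_zero (by simp [hprob b])
  have hkl_nonneg (a b : ℝ) : 0 ≤ ∫ z, π a z * log (π a z / π b z) ∂μ :=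
    integral_mul_log_div_nonneg (fun z => (expFamily_pos hpos hZpos hπ a z).le)
      (expFamily_pos hpos hZpos hπ b) (hπ_int a) (hπ_int b) (by rw [hprob, hprob]) (hkl a b).1
  have hgap : log (Z 1 / Z 0)
      - ∑ k ∈ Finset.range K, (β (k + 1) - β k) * (∫ z, π (β k) z * T z ∂μ)
      = ∑ k ∈ Finset.range K,
          ∫ z, π (β k) z * log (π (β k) z / π (β (k + 1)) z) ∂μ := by
    simp only [fun k => (hkl (β k) (β (k + 1))).2, Finset.sum_add_distrib,
      Finset.sum_range_sub (fun k => log (Z (β k))), h0, h1,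
      Real.log_div (hZpos 1).ne' (hZpos 0).ne']
    simp only [← neg_sub (β (_ + 1)), neg_mul, Finset.sum_neg_distrib]
    ring
  refine ⟨hgap, ?_⟩
  linarith [Finset.sum_nonneg fun k (_ : k ∈ Finset.range K) => hkl_nonneg (β k) (β (k + 1))]

/-- TVO lower bound gap. For any partition 0 = β₀ < … < β_K = 1,
log(Z₁/Z₀) − Σ_k Δβ_k E_{π_{β_{k-1}}}[T] = Σ_k KL(π_{β_{k-1}} ‖ π_{β_k}),
hence the left-Riemann sum is a lower bound on log(Z₁/Z₀). -/
theorem tvo_lower_bound_gap {α : Type*} [MeasurableSpace α] (μ : Measure α)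
    (π0 T : α → ℝ) (hpos : ∀ z, 0 < π0 z)
    (Z : ℝ → ℝ) (hZ : ∀ b, Z b = ∫ z, π0 z * Real.exp (b * T z) ∂μ)
    (hZpos : ∀ b, 0 < Z b)
    (π : ℝ → α → ℝ)
    (hπ : ∀ b z, π b z = π0 z * Real.exp (b * T z) / Z b)
    (hprob : ∀ b, ∫ z, π b z ∂μ = 1)
    (hT : ∀ b, Integrable (fun z => π b z * T z) μ)
    (K : ℕ) (hK : 0 < K) (β : ℕ → ℝ)
    (h0 : β 0 = 0) (h1 : β K = 1)
    (hmono : ∀ k < K, β k < β (k + 1)) :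
    (Real.log (Z 1 / Z 0)
        - ∑ k ∈ Finset.range K,
            (β (k + 1) - β k) * (∫ z, π (β k) z * T z ∂μ)
      = ∑ k ∈ Finset.range K,
          ∫ z, π (β k) z * Real.log (π (β k) z / π (β (k + 1)) z) ∂μ)
    ∧ (∑ k ∈ Finset.range K,
          (β (k + 1) - β k) * (∫ z, π (β k) z * T z ∂μ)
        ≤ Real.log (Z 1 / Z 0)) :=
  tvo_lower_bound_gap_general μ π0 T hpos Z hZpos π hπ hprob hT K β h0 h1
end

section
/- The difference of endpoint mean parameters equals the symmetrized KL between q and the posterior: η_1 − η_0 = KL(q(z|x) ‖ p(z|x)) + KL(p(z|x) ‖ q(z|x)), where η_β = E_{π_β}[log(p(x,z)/q(z|x))] and π_β ∝ q^{1-β} p(x,·)^β. -/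
/-!
Both endpoints of the geometric path are explicit: π₀ = q and π₁ = p(x, ·)/p(x), so η₀ is the
ELBO and η₁ the EUBO. Splitting off the constant log p(x) from the log-ratio gives the two gap
identities KL(q ‖ p(·|x)) = log p(x) − ELBO and KL(p(·|x) ‖ q) = EUBO − log p(x); adding them,
log p(x) cancels.
-/

open MeasureTheory

namespace GeometricMixture

variable {α : Type*} [MeasurableSpace α] {μ : Measure α}

theorem integral_mul_add_const_of_integral_eq_one {w g : α → ℝ} {c : ℝ}
    (hw : Integrable w μ) (hw1 : ∫ z, w z ∂μ = 1)
    (hint : Integrable (fun z => w z * (g z + c)) μ) :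
    ∫ z, w z * (g z + c) ∂μ = (∫ z, w z * g z ∂μ) + c := by
  have hwg : Integrable (fun z => w z * g z) μ := by
    refine (hint.sub (hw.mul_const c)).congr (Filter.Eventually.of_forall fun z => ?_)
    simp only [Pi.sub_apply]
    ring
  simp only [mul_add]
  rw [integral_add hwg (hw.mul_const c), integral_mul_const, hw1, one_mul]

theorem log_div_div_const {a b c : ℝ} (ha : a ≠ 0) (hb : b ≠ 0) (hc : c ≠ 0) :
    Real.log (a / (b / c)) = -Real.log (b / a) + Real.log c := by
  rw [Real.log_div ha (div_ne_zero hb hc), Real.log_div hb hc, Real.log_div hb ha]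
  ring

theorem log_div_const_div {a b c : ℝ} (ha : a ≠ 0) (hb : b ≠ 0) (hc : c ≠ 0) :
    Real.log (b / c / a) = Real.log (b / a) + -Real.log c := by
  rw [Real.log_div (div_ne_zero hb hc) ha, Real.log_div hb hc, Real.log_div hb ha]
  ring

variable {q p : α → ℝ} {c : ℝ}

/-- The ELBO gap: `c` plays the evidence `p(x)` and `p` the joint `p(x, ·)`. -/
theorem kl_eq_log_sub_elbo (hq : ∀ z, q z ≠ 0) (hp : ∀ z, p z ≠ 0) (hc : c ≠ 0)
    (hq1 : ∫ z, q z ∂μ = 1) (hint : Integrable (fun z => q z * Real.log (q z / (p z / c))) μ) :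
    ∫ z, q z * Real.log (q z / (p z / c)) ∂μ
      = Real.log c - ∫ z, q z * Real.log (p z / q z) ∂μ := by
  have hlog : ∀ z, Real.log (q z / (p z / c)) = -Real.log (p z / q z) + Real.log c :=
    fun z => log_div_div_const (hq z) (hp z) hc
  simp only [hlog] at hint ⊢
  rw [integral_mul_add_const_of_integral_eq_one
    (Integrable.of_integral_ne_zero (by rw [hq1]; exact one_ne_zero)) hq1 hint]
  simp only [mul_neg, integral_neg]
  ring

theorem kl_posterior_eq_eubo_sub_log (hq : ∀ z, q z ≠ 0) (hp : ∀ z, p z ≠ 0)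
    (hc : c = ∫ z, p z ∂μ) (hc0 : c ≠ 0)
    (hint : Integrable (fun z => p z / c * Real.log (p z / c / q z)) μ) :
    ∫ z, p z / c * Real.log (p z / c / q z) ∂μ
      = (∫ z, p z / c * Real.log (p z / q z) ∂μ) - Real.log c := by
  have hlog : ∀ z, Real.log (p z / c / q z) = Real.log (p z / q z) + -Real.log c :=
    fun z => log_div_const_div (hq z) (hp z) hc0
  have hp1 : ∫ z, p z / c ∂μ = 1 := by rw [integral_div, ← hc, div_self hc0]
  simp only [hlog] at hint ⊢
  rw [integral_mul_add_const_of_integral_eq_one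
    (Integrable.of_integral_ne_zero (by rw [hp1]; exact one_ne_zero)) hp1 hint]
  ring

end GeometricMixture

open GeometricMixture in
theorem endpoint_moments_symmetrized_KL_general {α : Type*} [MeasurableSpace α]
    (μ : Measure α) (q pj : α → ℝ) (hq : ∀ z, 0 < q z) (hpj : ∀ z, 0 < pj z)
    (px : ℝ) (hpx : px = ∫ z, pj z ∂μ) (hpxpos : 0 < px)
    (hqprob : ∫ z, q z ∂μ = 1)
    (Z : ℝ → ℝ) (hZ : ∀ b, Z b = ∫ z, q z ^ (1 - b) * pj z ^ b ∂μ)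
    (η : ℝ → ℝ)
    (hη : ∀ b, η b =
      ∫ z, (q z ^ (1 - b) * pj z ^ b / Z b) * Real.log (pj z / q z) ∂μ)
    (hint0 : Integrable (fun z => q z * Real.log (q z / (pj z / px))) μ)
    (hint1 : Integrable (fun z => (pj z / px) * Real.log ((pj z / px) / q z)) μ) :
    η 1 - η 0
      = (∫ z, q z * Real.log (q z / (pj z / px)) ∂μ)
        + (∫ z, (pj z / px) * Real.log ((pj z / px) / q z) ∂μ) := by
  have hη0 : η 0 = ∫ z, q z * Real.log (pj z / q z) ∂μ := by
    have hZ0 : Z 0 = 1 := by simpa [hqprob] using hZ 0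
    simp [hη, hZ0]
  have hη1 : η 1 = ∫ z, pj z / px * Real.log (pj z / q z) ∂μ := by
    have hZ1 : Z 1 = px := by simpa [← hpx] using hZ 1
    simp [hη, hZ1]
  have hq0 : ∀ z, q z ≠ 0 := fun z => (hq z).ne'
  have hpj0 : ∀ z, pj z ≠ 0 := fun z => (hpj z).ne'
  rw [kl_eq_log_sub_elbo hq0 hpj0 hpxpos.ne' hqprob hint0,
    kl_posterior_eq_eubo_sub_log hq0 hpj0 hpx hpxpos.ne' hint1, hη0, hη1]
  ring

/-- the difference of endpoint mean parameters of the geometric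
mixture path π_β ∝ q^{1-β} pj^β equals the symmetrized KL between q and the
posterior pj/p(x):  η₁ − η₀ = KL(q ‖ p(·|x)) + KL(p(·|x) ‖ q). -/
theorem endpoint_moments_symmetrized_KL {α : Type*} [MeasurableSpace α]
    (μ : Measure α) (q pj : α → ℝ) (hq : ∀ z, 0 < q z) (hpj : ∀ z, 0 < pj z)
    (px : ℝ) (hpx : px = ∫ z, pj z ∂μ) (hpxpos : 0 < px)
    (hqprob : ∫ z, q z ∂μ = 1)
    (Z : ℝ → ℝ) (hZ : ∀ b, Z b = ∫ z, q z ^ (1 - b) * pj z ^ b ∂μ)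
    (hZpos : ∀ b, 0 < Z b)
    (η : ℝ → ℝ)
    (hη : ∀ b, η b =
      ∫ z, (q z ^ (1 - b) * pj z ^ b / Z b) * Real.log (pj z / q z) ∂μ)
    (hint0 : Integrable (fun z => q z * Real.log (q z / (pj z / px))) μ)
    (hint1 : Integrable (fun z => (pj z / px) * Real.log ((pj z / px) / q z)) μ) :
    η 1 - η 0
      = (∫ z, q z * Real.log (q z / (pj z / px)) ∂μ)
        + (∫ z, (pj z / px) * Real.log ((pj z / px) / q z) ∂μ) :=
  endpoint_moments_symmetrized_KL_general μ q pj hq hpj px hpx hpxpos hqprob Z hZ η hη hint0 hint1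
end
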